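/- arXiv:1403.7529 — 2 statements merged into one kernel-verified Lean document; each statement's English description precedes it below -/
import Mathlib

section
/- For t ∈ ℝ let x₁(u,v,t) = (sin u cos v, t(π − v)v + sin u sin v, cos u). Then the mean-curvature numerator H₁(u,v,t) = e₁G₁ − 2F₁f₁ + g₁E₁ of the surface (u,v) ↦ x₁(u,v,t) is, for every fixed (u,v), a cubic polynomial in t: H₁(u,v,t) = p₀(u,v) + p₁(u,v) t + p₂(u,v) t² + p₃(u,v) t³, where p₀ = −2 sin³u, p₁ = −2 sin²u (sin v + 2(π − 2v) cos v), p₂ = −(1/4) (π − 2v)² sin u ( cos(2(u−v)) + cos(2(u+v)) − 2 cos(2u) + 6 cos(2v) + 6 ), and p₃ = −(π − 2v)³ cos v. -/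
/- Differential-geometric framework: partial derivatives, fundamental magnitudes,
   cross product and mean-curvature numerator for parametrized surfaces x : ℝ² → ℝ³. -/

noncomputable section
open Real MeasureTheory intervalIntegral
open scoped RealInnerProductSpace

abbrev E3 : Type := EuclideanSpace ℝ (Fin 3)

/-- The vector (a, b, c) ∈ ℝ³. -/
def vec3 (a b c : ℝ) : E3 := WithLp.toLp 2 ![a, b, c]

/-- Cross product on ℝ³. -/
def cross (a b : E3) : E3 :=
  vec3 (a 1 * b 2 - a 2 * b 1) (a 2 * b 0 - a 0 * b 2) (a 0 * b 1 - a 1 * b 0)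

/-- Partial derivative with respect to the first parameter. -/
def pu (x : ℝ → ℝ → E3) (u v : ℝ) : E3 := deriv (fun s => x s v) u

/-- Partial derivative with respect to the second parameter. -/
def pv (x : ℝ → ℝ → E3) (u v : ℝ) : E3 := deriv (fun s => x u s) v

/-- First fundamental magnitude E = ⟨x_u, x_u⟩. -/
def Emag (x : ℝ → ℝ → E3) (u v : ℝ) : ℝ := ⟪pu x u v, pu x u v⟫

/-- First fundamental magnitude F = ⟨x_u, x_v⟩. -/
def Fmag (x : ℝ → ℝ → E3) (u v : ℝ) : ℝ := ⟪pu x u v, pv x u v⟫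

/-- First fundamental magnitude G = ⟨x_v, x_v⟩. -/
def Gmag (x : ℝ → ℝ → E3) (u v : ℝ) : ℝ := ⟪pv x u v, pv x u v⟫

/-- Cross-product second fundamental magnitude e = ⟨x_uu, x_u × x_v⟩. -/
def emag (x : ℝ → ℝ → E3) (u v : ℝ) : ℝ := ⟪pu (pu x) u v, cross (pu x u v) (pv x u v)⟫

/-- Cross-product second fundamental magnitude f = ⟨x_uv, x_u × x_v⟩. -/
def fmag (x : ℝ → ℝ → E3) (u v : ℝ) : ℝ := ⟪pv (pu x) u v, cross (pu x u v) (pv x u v)⟫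

/-- Cross-product second fundamental magnitude g = ⟨x_vv, x_u × x_v⟩. -/
def gmag (x : ℝ → ℝ → E3) (u v : ℝ) : ℝ := ⟪pv (pv x) u v, cross (pu x u v) (pv x u v)⟫

/-- Mean-curvature numerator H = eG − 2Ff + gE. -/
def Hnum (x : ℝ → ℝ → E3) (u v : ℝ) : ℝ :=
  emag x u v * Gmag x u v - 2 * Fmag x u v * fmag x u v + gmag x u v * Emag x u v

/-- The normal-variation family x₁(u,v,t) = (sin u cos v, t(π − v)v + sin u sin v, cos u)
of the unit hemisphere, displaced by t v(π − v) in the fixed direction (0,1,0). -/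
def hemiVar (t : ℝ) : ℝ → ℝ → E3 :=
  fun u v => vec3 (Real.sin u * Real.cos v) (t * (π - v) * v + Real.sin u * Real.sin v)
    (Real.cos u)

/-! All partial derivatives of the displaced hemisphere are explicit. With
`w = π - 2v` one finds `E = 1`, `F = t w cos u sin v`, `G = sin² u + 2 t w sin u cos v + t² w²`,
`e = -(sin u + t w cos v)`, `f = -t w sin u cos u sin v` and
`g = -sin² u (sin u + t w cos v + 2 t sin v)`, so `H = eG - 2Ff + gE` is visibly cubic in `t`;
matching the `t²` coefficient with the stated one uses only `sin² + cos² = 1` and the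
double-angle formulas. -/

@[simp] lemma vec3_apply_zero (a b c : ℝ) : vec3 a b c 0 = a := rfl
@[simp] lemma vec3_apply_one (a b c : ℝ) : vec3 a b c 1 = b := rfl
@[simp] lemma vec3_apply_two (a b c : ℝ) : vec3 a b c 2 = c := rfl

lemma inner_vec3 (a b c a' b' c' : ℝ) :
    ⟪vec3 a b c, vec3 a' b' c'⟫ = a * a' + b * b' + c * c' := by
  simp only [PiLp.inner_apply, RCLike.inner_apply, conj_trivial, Fin.sum_univ_three,
    vec3_apply_zero, vec3_apply_one, vec3_apply_two]
  ring

lemma cross_vec3 (a b c a' b' c' : ℝ) :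
    cross (vec3 a b c) (vec3 a' b' c')
      = vec3 (b * c' - c * b') (c * a' - a * c') (a * b' - b * a') :=
  rfl

lemma HasDerivAt.vec3 {f g h : ℝ → ℝ} {f' g' h' x : ℝ}
    (hf : HasDerivAt f f' x) (hg : HasDerivAt g g' x) (hh : HasDerivAt h h' x) :
    HasDerivAt (fun s => vec3 (f s) (g s) (h s)) (vec3 f' g' h') x := by
  have hpi : HasDerivAt (fun s => (![f s, g s, h s] : Fin 3 → ℝ)) ![f', g', h'] x := by
    refine hasDerivAt_pi.mpr fun i => ?_
    fin_cases i <;> simpa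
  exact (PiLp.continuousLinearEquiv 2 ℝ (fun _ : Fin 3 => ℝ)).symm.hasFDerivAt.comp_hasDerivAt
    x hpi.hasFDerivAt

lemma pu_eq_of_hasDerivAt {x x' : ℝ → ℝ → E3}
    (h : ∀ u v, HasDerivAt (fun s => x s v) (x' u v) u) : pu x = x' :=
  funext fun u => funext fun v => (h u v).deriv

lemma pv_eq_of_hasDerivAt {x x' : ℝ → ℝ → E3}
    (h : ∀ u v, HasDerivAt (fun s => x u s) (x' u v) v) : pv x = x' :=
  funext fun u => funext fun v => (h u v).deriv

section hemiVar

variable (t u v : ℝ)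

lemma pu_hemiVar :
    pu (hemiVar t) = fun u v => vec3 (cos u * cos v) (cos u * sin v) (-sin u) :=
  pu_eq_of_hasDerivAt fun u _ =>
    ((hasDerivAt_sin u).mul_const _).vec3
      (((hasDerivAt_sin u).mul_const _).const_add _) (hasDerivAt_cos u)

lemma pv_hemiVar :
    pv (hemiVar t) = fun u v => vec3 (-(sin u * sin v)) (t * (π - 2 * v) + sin u * cos v) 0 := by
  refine pv_eq_of_hasDerivAt fun u v => ?_
  have hquad : HasDerivAt (fun s => t * (π - s) * s) (t * (π - 2 * v)) v := by
    have := (((hasDerivAt_id v).const_sub π).const_mul t).mul (hasDerivAt_id v)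
    simp only [id_eq] at this
    exact this.congr_deriv (by ring)
  exact (((hasDerivAt_cos v).const_mul _).congr_deriv (by ring)).vec3
    (hquad.add ((hasDerivAt_sin v).const_mul _)) (hasDerivAt_const v _)

lemma pu_pu_hemiVar :
    pu (pu (hemiVar t)) = fun u v => vec3 (-(sin u * cos v)) (-(sin u * sin v)) (-cos u) := by
  rw [pu_hemiVar]
  exact pu_eq_of_hasDerivAt fun u v =>
    (((hasDerivAt_cos u).mul_const _).congr_deriv (by ring)).vec3
      (((hasDerivAt_cos u).mul_const _).congr_deriv (by ring)) (hasDerivAt_sin u).neg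

lemma pv_pu_hemiVar :
    pv (pu (hemiVar t)) = fun u v => vec3 (-(cos u * sin v)) (cos u * cos v) 0 := by
  rw [pu_hemiVar]
  exact pv_eq_of_hasDerivAt fun u v =>
    (((hasDerivAt_cos v).const_mul _).congr_deriv (by ring)).vec3
      ((hasDerivAt_sin v).const_mul _) (hasDerivAt_const v _)

lemma pv_pv_hemiVar :
    pv (pv (hemiVar t)) = fun u v => vec3 (-(sin u * cos v)) (-2 * t - sin u * sin v) 0 := by
  rw [pv_hemiVar]
  refine pv_eq_of_hasDerivAt fun u v => ?_
  have hlin : HasDerivAt (fun s => t * (π - 2 * s)) (-2 * t) v := by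
    have := (((hasDerivAt_id v).const_mul (2 : ℝ)).const_sub π).const_mul t
    simp only [id_eq] at this
    exact this.congr_deriv (by ring)
  exact (((hasDerivAt_sin v).const_mul _).neg.congr_deriv (by ring)).vec3
    ((hlin.add ((hasDerivAt_cos v).const_mul _)).congr_deriv (by ring)) (hasDerivAt_const v _)

lemma cross_pu_pv_hemiVar :
    cross (pu (hemiVar t) u v) (pv (hemiVar t) u v)
      = vec3 (sin u * (t * (π - 2 * v) + sin u * cos v)) (sin u ^ 2 * sin v)
          (cos u * (t * (π - 2 * v) * cos v + sin u)) := by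
  rw [pu_hemiVar, pv_hemiVar, cross_vec3]
  congr 1
  · ring
  · ring
  · linear_combination cos u * sin u * sin_sq_add_cos_sq v

lemma Emag_hemiVar : Emag (hemiVar t) u v = 1 := by
  rw [Emag, pu_hemiVar, inner_vec3]
  linear_combination cos u ^ 2 * sin_sq_add_cos_sq v + sin_sq_add_cos_sq u

lemma Fmag_hemiVar : Fmag (hemiVar t) u v = t * (π - 2 * v) * cos u * sin v := by
  rw [Fmag, pu_hemiVar, pv_hemiVar, inner_vec3]
  ring

lemma Gmag_hemiVar :
    Gmag (hemiVar t) u v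
      = sin u ^ 2 + 2 * t * (π - 2 * v) * sin u * cos v + t ^ 2 * (π - 2 * v) ^ 2 := by
  rw [Gmag, pv_hemiVar, inner_vec3]
  linear_combination sin u ^ 2 * sin_sq_add_cos_sq v

lemma emag_hemiVar : emag (hemiVar t) u v = -(sin u + t * (π - 2 * v) * cos v) := by
  rw [emag, cross_pu_pv_hemiVar, pu_pu_hemiVar, inner_vec3]
  linear_combination (-sin u ^ 3) * sin_sq_add_cos_sq v
    - (sin u + t * (π - 2 * v) * cos v) * sin_sq_add_cos_sq u

lemma fmag_hemiVar : fmag (hemiVar t) u v = -(t * (π - 2 * v) * sin u * cos u * sin v) := by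
  rw [fmag, cross_pu_pv_hemiVar, pv_pu_hemiVar, inner_vec3]
  ring

lemma gmag_hemiVar :
    gmag (hemiVar t) u v = -(sin u ^ 2 * (sin u + t * (π - 2 * v) * cos v + 2 * t * sin v)) := by
  rw [gmag, cross_pu_pv_hemiVar, pv_pv_hemiVar, inner_vec3]
  linear_combination (-sin u ^ 3) * sin_sq_add_cos_sq v

end hemiVar

/-- The mean-curvature numerator of the displaced hemisphere is, for each fixed (u,v),
a cubic polynomial in t with the stated coefficients. -/
theorem stmt_4 (u v t : ℝ) :
    Hnum (hemiVar t) u v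
      = (-2 * Real.sin u ^ 3)
        + (-2 * Real.sin u ^ 2 * (Real.sin v + 2 * (π - 2 * v) * Real.cos v)) * t
        + (-(1 / 4) * (π - 2 * v) ^ 2 * Real.sin u
            * (Real.cos (2 * (u - v)) + Real.cos (2 * (u + v)) - 2 * Real.cos (2 * u)
                + 6 * Real.cos (2 * v) + 6)) * t ^ 2
        + (-(π - 2 * v) ^ 3 * Real.cos v) * t ^ 3 := by
  have hcos : cos (2 * (u - v)) + cos (2 * (u + v)) - 2 * cos (2 * u) + 6 * cos (2 * v) + 6
      = 4 * (3 * cos v ^ 2 - (cos u ^ 2 - sin u ^ 2) * sin v ^ 2) := by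
    rw [mul_sub, mul_add, cos_sub, cos_add, cos_two_mul, cos_two_mul, sin_two_mul, sin_two_mul]
    linear_combination (8 * cos u ^ 2 - 4) * sin_sq_add_cos_sq v - 4 * sin v ^ 2 * sin_sq_add_cos_sq u
  rw [Hnum, Emag_hemiVar, Fmag_hemiVar, Gmag_hemiVar, emag_hemiVar, fmag_hemiVar, gmag_hemiVar,
    hcos]
  linear_combination (π - 2 * v) ^ 2 * t ^ 2 * sin u
    * (sin_sq_add_cos_sq v + sin v ^ 2 * sin_sq_add_cos_sq u)
end
end

section
/- Let x : ℝ² → ℝ³ be a smooth map that is a regular parametrized surface on a neighborhood of [0,1]² (i.e. EG − F² > 0 there), with unit normal N = (x_u × x_v)/‖x_u × x_v‖ and mean curvature H = (Ge − 2Ff′ + Eg)/(2(EG − F²)), where e = ⟨x_uu, N⟩, f′ = ⟨x_uv, N⟩, g = ⟨x_vv, N⟩. Let b : ℝ² → ℝ be smooth with b ≥ 0 on [0,1]², and define the normal variation x^t(u,v) = x(u,v) + t b(u,v) H(u,v) N(u,v) and its area A(t) = ∫₀¹ ∫₀¹ ‖∂_u x^t × ∂_v x^t‖ du dv. Then A is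 differentiable at t = 0 with A′(0) = −∫₀¹ ∫₀¹ 2 b(u,v) H(u,v)² √(E G − F²) du dv ≤ 0; in particular, choosing the variation function proportional to the mean curvature never increases the area to first order. -/
/- Differential-geometric framework: partial derivatives, fundamental magnitudes,
   cross product and mean-curvature numerator for parametrized surfaces x : ℝ² → ℝ³. -/

noncomputable section
open Real MeasureTheory intervalIntegral
open scoped RealInnerProductSpace

/-- Unit normal N = (x_u × x_v)/‖x_u × x_v‖. -/
def Nvec (x : ℝ → ℝ → E3) (u v : ℝ) : E3 :=
  ‖cross (pu x u v) (pv x u v)‖⁻¹ • cross (pu x u v) (pv x u v)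

/-- Mean curvature H = (Ge − 2Ff′ + Eg)/(2(EG − F²)), using the unit-normal second
fundamental magnitudes e = ⟨x_uu, N⟩, f′ = ⟨x_uv, N⟩, g = ⟨x_vv, N⟩. -/
def meanCurv (x : ℝ → ℝ → E3) (u v : ℝ) : ℝ :=
  (Gmag x u v * ⟪pu (pu x) u v, Nvec x u v⟫
      - 2 * Fmag x u v * ⟪pv (pu x) u v, Nvec x u v⟫
      + Emag x u v * ⟪pv (pv x) u v, Nvec x u v⟫)
    / (2 * (Emag x u v * Gmag x u v - Fmag x u v ^ 2))

/-!
Write `c = x_u × x_v`, so that `‖c‖ = √(EG − F²)`, and `ψ = b H N`. Then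
`x^t_u × x^t_v = c + t m + t² q` with `m = ψ_u × x_v + x_u × ψ_v`. Differentiating
`⟨ψ, x_u⟩ = ⟨ψ, x_v⟩ = 0` turns `⟨ψ_u, x_u⟩` into `−⟨ψ, x_uu⟩` and so on, so that by Lagrange's
identity and `x_uv = x_vu`
`⟨c, m⟩ = −(G⟨ψ, x_uu⟩ − 2F⟨ψ, x_uv⟩ + E⟨ψ, x_vv⟩) = −2 b H² (EG − F²)`.
The integrand `t ↦ ‖c + t m + t² q‖` is Lipschitz near `t = 0`, uniformly over the compact square,
and has derivative `⟨c, m⟩ / ‖c‖` at `t = 0` where `c ≠ 0`, so differentiating under the integral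
sign gives `A′(0) = −∫∫ 2 b H² √(EG − F²)`.
-/

open Function Set Filter Topology
open scoped ContDiff

section CrossProduct

theorem inner_eq_sum_three (a b : E3) : ⟪a, b⟫ = a 0 * b 0 + a 1 * b 1 + a 2 * b 2 := by
  simp [PiLp.inner_apply, Fin.sum_univ_three]; ring

@[simp] theorem cross_apply_zero (a b : E3) : cross a b 0 = a 1 * b 2 - a 2 * b 1 := by
  simp [cross, vec3]

@[simp] theorem cross_apply_one (a b : E3) : cross a b 1 = a 2 * b 0 - a 0 * b 2 := by
  simp [cross, vec3]

@[simp] theorem cross_apply_two (a b : E3) : cross a b 2 = a 0 * b 1 - a 1 * b 0 := by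
  simp [cross, vec3]

theorem inner_cross_cross (a b c d : E3) :
    ⟪cross a b, cross c d⟫ = ⟪a, c⟫ * ⟪b, d⟫ - ⟪a, d⟫ * ⟪b, c⟫ := by
  simp only [inner_eq_sum_three, cross_apply_zero, cross_apply_one, cross_apply_two]; ring

theorem inner_self_cross (a b : E3) : ⟪a, cross a b⟫ = 0 := by
  simp only [inner_eq_sum_three, cross_apply_zero, cross_apply_one, cross_apply_two]; ring

theorem inner_cross_self (a b : E3) : ⟪b, cross a b⟫ = 0 := by
  simp only [inner_eq_sum_three, cross_apply_zero, cross_apply_one, cross_apply_two]; ring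

theorem norm_cross_sq (a b : E3) : ‖cross a b‖ ^ 2 = ⟪a, a⟫ * ⟪b, b⟫ - ⟪a, b⟫ ^ 2 := by
  rw [← real_inner_self_eq_norm_sq, inner_cross_cross, real_inner_comm b a]; ring

theorem cross_add_smul_add_smul (a b w z : E3) (t : ℝ) :
    cross (a + t • w) (b + t • z)
      = cross a b + t • (cross w b + cross a z) + t ^ 2 • cross w z := by
  ext i; fin_cases i <;> simp <;> ring

theorem isBoundedBilinearMap_cross : IsBoundedBilinearMap ℝ fun p : E3 × E3 => cross p.1 p.2 := by
  refine ⟨fun a b c => ?_, fun r a b => ?_, fun a b c => ?_, fun r a b => ?_, 1, one_pos,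
    fun a b => ?_⟩
  rotate_left 4
  · rw [one_mul, ← abs_norm (cross a b), ← abs_of_nonneg (by positivity : 0 ≤ ‖a‖ * ‖b‖)]
    refine sq_le_sq.1 ?_
    rw [norm_cross_sq, mul_pow, ← real_inner_self_eq_norm_sq, ← real_inner_self_eq_norm_sq]
    nlinarith [sq_nonneg ⟪a, b⟫]
  all_goals ext i; fin_cases i <;> simp <;> ring

theorem ContDiffOn.cross {X : Type*} [NormedAddCommGroup X] [NormedSpace ℝ X] {n : WithTop ℕ∞}
    {f g : X → E3} {s : Set X} (hf : ContDiffOn ℝ n f s) (hg : ContDiffOn ℝ n g s) :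
    ContDiffOn ℝ n (fun p => cross (f p) (g p)) s :=
  isBoundedBilinearMap_cross.contDiff.comp_contDiffOn (hf.prodMk hg)

end CrossProduct

section PartialDerivatives

variable {f g : ℝ → ℝ → E3} {U : Set (ℝ × ℝ)} {u v : ℝ}

theorem hasDerivAt_pu (hf : DifferentiableAt ℝ (uncurry f) (u, v)) :
    HasDerivAt (fun s => f s v) (fderiv ℝ (uncurry f) (u, v) (1, 0)) u :=
  hf.hasFDerivAt.comp_hasDerivAt (f := fun s => (s, v)) u
    ((hasDerivAt_id u).prodMk (hasDerivAt_const u v))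

theorem hasDerivAt_pv (hf : DifferentiableAt ℝ (uncurry f) (u, v)) :
    HasDerivAt (fun s => f u s) (fderiv ℝ (uncurry f) (u, v) (0, 1)) v :=
  hf.hasFDerivAt.comp_hasDerivAt (f := fun s => (u, s)) v
    ((hasDerivAt_const v u).prodMk (hasDerivAt_id v))

theorem pu_eq_fderiv (hf : DifferentiableAt ℝ (uncurry f) (u, v)) :
    pu f u v = fderiv ℝ (uncurry f) (u, v) (1, 0) :=
  (hasDerivAt_pu hf).deriv

theorem pv_eq_fderiv (hf : DifferentiableAt ℝ (uncurry f) (u, v)) :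
    pv f u v = fderiv ℝ (uncurry f) (u, v) (0, 1) :=
  (hasDerivAt_pv hf).deriv

theorem contDiffOn_uncurry_pu (hU : IsOpen U) (hf : ContDiffOn ℝ ∞ (uncurry f) U) :
    ContDiffOn ℝ ∞ (uncurry (pu f)) U :=
  ((hf.fderiv_of_isOpen hU (by simp)).clm_apply contDiffOn_const).congr fun p hp =>
    pu_eq_fderiv ((hf.contDiffAt (hU.mem_nhds hp)).differentiableAt (by simp))

theorem contDiffOn_uncurry_pv (hU : IsOpen U) (hf : ContDiffOn ℝ ∞ (uncurry f) U) :
    ContDiffOn ℝ ∞ (uncurry (pv f)) U :=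
  ((hf.fderiv_of_isOpen hU (by simp)).clm_apply contDiffOn_const).congr fun p hp =>
    pv_eq_fderiv ((hf.contDiffAt (hU.mem_nhds hp)).differentiableAt (by simp))

theorem contDiff_uncurry_pu (hf : ContDiff ℝ ∞ (uncurry f)) : ContDiff ℝ ∞ (uncurry (pu f)) :=
  contDiffOn_univ.1 (contDiffOn_uncurry_pu isOpen_univ hf.contDiffOn)

theorem contDiff_uncurry_pv (hf : ContDiff ℝ ∞ (uncurry f)) : ContDiff ℝ ∞ (uncurry (pv f)) :=
  contDiffOn_univ.1 (contDiffOn_uncurry_pv isOpen_univ hf.contDiffOn)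

theorem pu_pv_comm (hf : ContDiff ℝ 2 (uncurry f)) (u v : ℝ) :
    pu (pv f) u v = pv (pu f) u v := by
  have hd : Differentiable ℝ (uncurry f) := hf.differentiable (by simp)
  have hd2 : Differentiable ℝ (fderiv ℝ (uncurry f)) :=
    (hf.fderiv_right (m := 1) (by norm_num)).differentiable one_ne_zero
  have hpu : pu f = fun a c => fderiv ℝ (uncurry f) (a, c) (1, 0) :=
    funext₂ fun a c => pu_eq_fderiv (hd _)
  have hpv : pv f = fun a c => fderiv ℝ (uncurry f) (a, c) (0, 1) :=
    funext₂ fun a c => pv_eq_fderiv (hd _)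
  have hsymm := hf.contDiffAt.isSymmSndFDerivAt (x := (u, v))
    (by simp [minSmoothness_of_isRCLikeNormedField]) (1, 0) (0, 1)
  rw [hpu, hpv, pu_eq_fderiv, pv_eq_fderiv]
  · have h := fun w : ℝ × ℝ => fderiv_clm_apply (hd2 (u, v)) (differentiableAt_const w)
    simp only [uncurry_def] at h ⊢
    rw [h, h]
    simpa [uncurry_def] using hsymm
  all_goals exact (hd2 _).clm_apply (differentiableAt_const _)

theorem pu_add_smul (hf : DifferentiableAt ℝ (uncurry f) (u, v))
    (hg : DifferentiableAt ℝ (uncurry g) (u, v)) (t : ℝ) :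
    pu (fun a c => f a c + t • g a c) u v = pu f u v + t • pu g u v :=
  ((hasDerivAt_pu hf).add ((hasDerivAt_pu hg).const_smul t)).deriv.trans <| by
    rw [pu_eq_fderiv hf, pu_eq_fderiv hg]

theorem pv_add_smul (hf : DifferentiableAt ℝ (uncurry f) (u, v))
    (hg : DifferentiableAt ℝ (uncurry g) (u, v)) (t : ℝ) :
    pv (fun a c => f a c + t • g a c) u v = pv f u v + t • pv g u v :=
  ((hasDerivAt_pv hf).add ((hasDerivAt_pv hg).const_smul t)).deriv.trans <| by
    rw [pv_eq_fderiv hf, pv_eq_fderiv hg]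

theorem inner_pu_eq_neg_of_inner_eq_zero (hf : DifferentiableAt ℝ (uncurry f) (u, v))
    (hg : DifferentiableAt ℝ (uncurry g) (u, v)) (h : ∀ a c, ⟪f a c, g a c⟫ = 0) :
    ⟪pu f u v, g u v⟫ = -⟪f u v, pu g u v⟫ := by
  have hd := (hasDerivAt_pu hf).inner ℝ (hasDerivAt_pu hg)
  simp only [h, ← pu_eq_fderiv hf, ← pu_eq_fderiv hg] at hd
  linarith [hd.unique (hasDerivAt_const u 0)]

theorem inner_pv_eq_neg_of_inner_eq_zero (hf : DifferentiableAt ℝ (uncurry f) (u, v))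
    (hg : DifferentiableAt ℝ (uncurry g) (u, v)) (h : ∀ a c, ⟪f a c, g a c⟫ = 0) :
    ⟪pv f u v, g u v⟫ = -⟪f u v, pv g u v⟫ := by
  have hd := (hasDerivAt_pv hf).inner ℝ (hasDerivAt_pv hg)
  simp only [h, ← pv_eq_fderiv hf, ← pv_eq_fderiv hg] at hd
  linarith [hd.unique (hasDerivAt_const v 0)]

end PartialDerivatives

section Surface

variable {x ψ : ℝ → ℝ → E3} {U : Set (ℝ × ℝ)} {u v : ℝ}

theorem norm_cross_pu_pv (x : ℝ → ℝ → E3) (u v : ℝ) :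
    ‖cross (pu x u v) (pv x u v)‖ = √(Emag x u v * Gmag x u v - Fmag x u v ^ 2) := by
  rw [Emag, Fmag, Gmag, ← norm_cross_sq, Real.sqrt_sq (norm_nonneg _)]

theorem cross_pu_pv_ne_zero (h : 0 < Emag x u v * Gmag x u v - Fmag x u v ^ 2) :
    cross (pu x u v) (pv x u v) ≠ 0 := by
  rw [← norm_pos_iff, norm_cross_pu_pv]; exact Real.sqrt_pos.2 h

theorem inner_Nvec_pu (x : ℝ → ℝ → E3) (u v : ℝ) : ⟪Nvec x u v, pu x u v⟫ = 0 := by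
  rw [Nvec, real_inner_smul_left, real_inner_comm, inner_self_cross, mul_zero]

theorem inner_Nvec_pv (x : ℝ → ℝ → E3) (u v : ℝ) : ⟪Nvec x u v, pv x u v⟫ = 0 := by
  rw [Nvec, real_inner_smul_left, real_inner_comm, inner_cross_self, mul_zero]

theorem contDiffOn_uncurry_Nvec (hx : ContDiff ℝ ∞ (uncurry x))
    (hQ : ∀ p ∈ U, 0 < Emag x p.1 p.2 * Gmag x p.1 p.2 - Fmag x p.1 p.2 ^ 2) :
    ContDiffOn ℝ ∞ (uncurry (Nvec x)) U := by
  have hc : ContDiffOn ℝ ∞ (fun p : ℝ × ℝ => cross (pu x p.1 p.2) (pv x p.1 p.2)) U :=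
    (contDiff_uncurry_pu hx).contDiffOn.cross (contDiff_uncurry_pv hx).contDiffOn
  have hc0 : ∀ p ∈ U, cross (pu x p.1 p.2) (pv x p.1 p.2) ≠ 0 := fun p hp =>
    cross_pu_pv_ne_zero (hQ p hp)
  exact ((hc.norm ℝ hc0).inv fun p hp => norm_ne_zero_iff.2 (hc0 p hp)).smul hc

theorem contDiffOn_uncurry_meanCurv (hx : ContDiff ℝ ∞ (uncurry x))
    (hQ : ∀ p ∈ U, 0 < Emag x p.1 p.2 * Gmag x p.1 p.2 - Fmag x p.1 p.2 ^ 2) :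
    ContDiffOn ℝ ∞ (uncurry (meanCurv x)) U := by
  have hxu := contDiff_uncurry_pu hx
  have hxv := contDiff_uncurry_pv hx
  have hN := contDiffOn_uncurry_Nvec hx hQ
  have hE : ContDiff ℝ ∞ fun p : ℝ × ℝ => Emag x p.1 p.2 := hxu.inner ℝ hxu
  have hF : ContDiff ℝ ∞ fun p : ℝ × ℝ => Fmag x p.1 p.2 := hxu.inner ℝ hxv
  have hG : ContDiff ℝ ∞ fun p : ℝ × ℝ => Gmag x p.1 p.2 := hxv.inner ℝ hxv
  have hnum : ContDiffOn ℝ ∞ (fun p : ℝ × ℝ =>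
      Gmag x p.1 p.2 * ⟪pu (pu x) p.1 p.2, Nvec x p.1 p.2⟫
        - 2 * Fmag x p.1 p.2 * ⟪pv (pu x) p.1 p.2, Nvec x p.1 p.2⟫
        + Emag x p.1 p.2 * ⟪pv (pv x) p.1 p.2, Nvec x p.1 p.2⟫) U :=
    ((hG.contDiffOn.mul ((contDiff_uncurry_pu hxu).contDiffOn.inner ℝ hN)).sub
      ((contDiffOn_const.mul hF.contDiffOn).mul
        ((contDiff_uncurry_pv hxu).contDiffOn.inner ℝ hN))).add
      (hE.contDiffOn.mul ((contDiff_uncurry_pv hxv).contDiffOn.inner ℝ hN))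
  exact hnum.div (contDiffOn_const.mul ((hE.mul hG).sub (hF.pow 2)).contDiffOn)
    fun p hp => by have := hQ p hp; positivity

theorem cross_pu_pv_add_smul (hx : DifferentiableAt ℝ (uncurry x) (u, v))
    (hψ : DifferentiableAt ℝ (uncurry ψ) (u, v)) (t : ℝ) :
    cross (pu (fun a c => x a c + t • ψ a c) u v) (pv (fun a c => x a c + t • ψ a c) u v)
      = cross (pu x u v) (pv x u v)
        + t • (cross (pu ψ u v) (pv x u v) + cross (pu x u v) (pv ψ u v))
        + t ^ 2 • cross (pu ψ u v) (pv ψ u v) := by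
  rw [pu_add_smul hx hψ, pv_add_smul hx hψ, cross_add_smul_add_smul]

theorem inner_cross_variation_of_orthogonal (hx : ContDiff ℝ ∞ (uncurry x))
    (hψ : DifferentiableAt ℝ (uncurry ψ) (u, v))
    (hψu : ∀ a c, ⟪ψ a c, pu x a c⟫ = 0) (hψv : ∀ a c, ⟪ψ a c, pv x a c⟫ = 0) :
    ⟪cross (pu x u v) (pv x u v), cross (pu ψ u v) (pv x u v) + cross (pu x u v) (pv ψ u v)⟫
      = -(Gmag x u v * ⟪ψ u v, pu (pu x) u v⟫ - 2 * Fmag x u v * ⟪ψ u v, pv (pu x) u v⟫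
          + Emag x u v * ⟪ψ u v, pv (pv x) u v⟫) := by
  have hxu : Differentiable ℝ (uncurry (pu x)) :=
    (contDiff_uncurry_pu hx).differentiable (by simp)
  have hxv : Differentiable ℝ (uncurry (pv x)) :=
    (contDiff_uncurry_pv hx).differentiable (by simp)
  have huu := inner_pu_eq_neg_of_inner_eq_zero hψ (hxu (u, v)) hψu
  have huv := inner_pu_eq_neg_of_inner_eq_zero hψ (hxv (u, v)) hψv
  have hvu := inner_pv_eq_neg_of_inner_eq_zero hψ (hxu (u, v)) hψu
  have hvv := inner_pv_eq_neg_of_inner_eq_zero hψ (hxv (u, v)) hψv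
  rw [pu_pv_comm (contDiff_infty.1 hx 2)] at huv
  rw [inner_add_right, inner_cross_cross, inner_cross_cross, Emag, Fmag, Gmag,
    real_inner_comm (pu ψ u v), real_inner_comm (pv ψ u v), real_inner_comm (pu ψ u v),
    real_inner_comm (pv ψ u v), real_inner_comm (pu x u v) (pv x u v), huu, huv, hvu, hvv]
  ring

theorem inner_cross_variation_div_norm_of_normal {φ : ℝ → ℝ → ℝ} (hx : ContDiff ℝ ∞ (uncurry x))
    (hψ : ψ = fun a c => φ a c • Nvec x a c) (hdψ : DifferentiableAt ℝ (uncurry ψ) (u, v))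
    (hQ : 0 < Emag x u v * Gmag x u v - Fmag x u v ^ 2) :
    ⟪cross (pu x u v) (pv x u v), cross (pu ψ u v) (pv x u v) + cross (pu x u v) (pv ψ u v)⟫
        / ‖cross (pu x u v) (pv x u v)‖
      = -(2 * φ u v * meanCurv x u v * √(Emag x u v * Gmag x u v - Fmag x u v ^ 2)) := by
  subst hψ
  rw [inner_cross_variation_of_orthogonal hx hdψ
      (fun a c => by rw [real_inner_smul_left, inner_Nvec_pu, mul_zero])
      (fun a c => by rw [real_inner_smul_left, inner_Nvec_pv, mul_zero]),
    norm_cross_pu_pv, meanCurv]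
  simp only [real_inner_smul_left, real_inner_comm (Nvec x u v)]
  have hsq := Real.sq_sqrt hQ.le
  have hpos := Real.sqrt_pos.2 hQ
  generalize √(Emag x u v * Gmag x u v - Fmag x u v ^ 2) = s at hsq hpos ⊢
  rw [← hsq]
  field_simp

end Surface

section IteratedIntegrals

variable {E : Type*} [NormedAddCommGroup E] [NormedSpace ℝ E]

theorem intervalIntegral_intervalIntegral_eq_setIntegral {f : ℝ × ℝ → E} {a b c d : ℝ}
    (hab : a ≤ b) (hcd : c ≤ d) (hf : ContinuousOn f (Icc a b ×ˢ Icc c d)) :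
    ∫ u in a..b, ∫ v in c..d, f (u, v) = ∫ p in Icc a b ×ˢ Icc c d, f p := by
  rw [Measure.volume_eq_prod, setIntegral_prod _
    (hf.integrableOn_compact (isCompact_Icc.prod isCompact_Icc)),
    intervalIntegral.integral_of_le hab, integral_Icc_eq_integral_Ioc]
  congr 1
  funext u
  rw [intervalIntegral.integral_of_le hcd, integral_Icc_eq_integral_Ioc]

theorem intervalIntegral_intervalIntegral_congr {f g : ℝ → ℝ → E} {a b c d : ℝ}
    (h : ∀ u ∈ uIcc a b, ∀ v ∈ uIcc c d, f u v = g u v) :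
    ∫ u in a..b, ∫ v in c..d, f u v = ∫ u in a..b, ∫ v in c..d, g u v :=
  intervalIntegral.integral_congr fun u hu =>
    intervalIntegral.integral_congr fun v hv => h u hu v hv

end IteratedIntegrals

section FirstVariationOfNorm

variable {F : Type*} [NormedAddCommGroup F] [InnerProductSpace ℝ F]

theorem HasDerivAt.norm_of_ne_zero {f : ℝ → F} {f' : F} {t : ℝ} (hf : HasDerivAt f f' t)
    (h0 : f t ≠ 0) : HasDerivAt (fun s => ‖f s‖) (⟪f t, f'⟫ / ‖f t‖) t := by
  have h := hf.norm_sq.sqrt (by positivity)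
  simp only [Real.sqrt_sq (norm_nonneg _)] at h
  convert h using 1
  field_simp

theorem hasDerivAt_norm_add_smul_add_sq_smul (c m q : F) (hc : c ≠ 0) :
    HasDerivAt (fun t : ℝ => ‖c + t • m + t ^ 2 • q‖) (⟪c, m⟫ / ‖c‖) 0 := by
  have h : HasDerivAt (fun t : ℝ => c + t • m + t ^ 2 • q) m 0 := by
    simpa using (((hasDerivAt_id (0:ℝ)).smul_const m).const_add c).fun_add
      ((hasDerivAt_pow 2 (0:ℝ)).smul_const q)
  simpa using h.norm_of_ne_zero (by simpa using hc)

theorem lipschitzOnWith_norm_add_smul_add_sq_smul (c m q : F) :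
    LipschitzOnWith (Real.nnabs (‖m‖ + 2 * ‖q‖)) (fun t : ℝ => ‖c + t • m + t ^ 2 • q‖)
      (Metric.ball 0 1) := by
  rw [Real.nnabs_of_nonneg (by positivity)]
  refine LipschitzOnWith.of_dist_le' fun t ht s hs => ?_
  rw [Metric.mem_ball, Real.dist_0_eq_abs] at ht hs
  have hts : |t + s| ≤ 2 := (abs_add_le t s).trans (by linarith)
  calc dist ‖c + t • m + t ^ 2 • q‖ ‖c + s • m + s ^ 2 • q‖
      ≤ ‖(t - s) • (m + (t + s) • q)‖ := by
        rw [Real.dist_eq]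
        refine (abs_norm_sub_norm_le _ _).trans_eq ?_
        congr 1
        module
    _ ≤ |t - s| * (‖m‖ + |t + s| * ‖q‖) := by
        rw [norm_smul, Real.norm_eq_abs]
        gcongr
        exact (norm_add_le _ _).trans (by rw [norm_smul, Real.norm_eq_abs])
    _ ≤ (‖m‖ + 2 * ‖q‖) * dist t s := by
        rw [Real.dist_eq, mul_comm]
        gcongr

variable {X : Type*} [TopologicalSpace X] [MeasurableSpace X] [OpensMeasurableSpace X]
  {μ : Measure X} [IsFiniteMeasureOnCompacts μ]

theorem hasDerivAt_setIntegral_norm_add_smul_add_sq_smul {K : Set X} (hK : IsCompact K)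
    (hKm : MeasurableSet K) {c m q : X → F} (hc : ContinuousOn c K) (hm : ContinuousOn m K)
    (hq : ContinuousOn q K) (hc0 : ∀ p ∈ K, c p ≠ 0) :
    HasDerivAt (fun t : ℝ => ∫ p in K, ‖c p + t • m p + t ^ 2 • q p‖ ∂μ)
      (∫ p in K, ⟪c p, m p⟫ / ‖c p‖ ∂μ) 0 := by
  have hF (t : ℝ) : ContinuousOn (fun p => ‖c p + t • m p + t ^ 2 • q p‖) K := by fun_prop
  have hF' : ContinuousOn (fun p => ⟪c p, m p⟫ / ‖c p‖) K :=
    (hc.inner hm).div hc.norm fun p hp => norm_ne_zero_iff.mpr (hc0 p hp)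
  refine (hasDerivAt_integral_of_dominated_loc_of_lip (Metric.ball_mem_nhds 0 one_pos)
    (Eventually.of_forall fun t => (hF t).aestronglyMeasurable hKm)
    ((hF 0).integrableOn_compact' hK hKm) (hF'.aestronglyMeasurable hKm)
    ((ae_restrict_iff' hKm).2 <| Eventually.of_forall fun p _ =>
      lipschitzOnWith_norm_add_smul_add_sq_smul (c p) (m p) (q p))
    ((hm.norm.add (continuousOn_const.mul hq.norm)).integrableOn_compact' hK hKm)
    ((ae_restrict_iff' hKm).2 <| Eventually.of_forall fun p hp =>
      hasDerivAt_norm_add_smul_add_sq_smul (c p) (m p) (q p) (hc0 p hp))).2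

theorem hasDerivAt_intervalIntegral_intervalIntegral_norm_add_smul_add_sq_smul
    {c m q : ℝ × ℝ → F} {a₁ b₁ a₂ b₂ : ℝ} (h₁ : a₁ ≤ b₁) (h₂ : a₂ ≤ b₂)
    (hc : ContinuousOn c (Icc a₁ b₁ ×ˢ Icc a₂ b₂)) (hm : ContinuousOn m (Icc a₁ b₁ ×ˢ Icc a₂ b₂))
    (hq : ContinuousOn q (Icc a₁ b₁ ×ˢ Icc a₂ b₂)) (hc0 : ∀ p ∈ Icc a₁ b₁ ×ˢ Icc a₂ b₂, c p ≠ 0) :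
    HasDerivAt
      (fun t : ℝ => ∫ u in a₁..b₁, ∫ v in a₂..b₂, ‖c (u, v) + t • m (u, v) + t ^ 2 • q (u, v)‖)
      (∫ u in a₁..b₁, ∫ v in a₂..b₂, ⟪c (u, v), m (u, v)⟫ / ‖c (u, v)‖) 0 := by
  rw [intervalIntegral_intervalIntegral_eq_setIntegral (f := fun p => ⟪c p, m p⟫ / ‖c p‖) h₁ h₂
    ((hc.inner hm).div hc.norm fun p hp => norm_ne_zero_iff.2 (hc0 p hp))]
  refine (hasDerivAt_setIntegral_norm_add_smul_add_sq_smul (isCompact_Icc.prod isCompact_Icc)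
    (measurableSet_Icc.prod measurableSet_Icc) hc hm hq hc0).congr_of_eventuallyEq
    (Eventually.of_forall fun t => ?_)
  exact intervalIntegral_intervalIntegral_eq_setIntegral
    (f := fun p => ‖c p + t • m p + t ^ 2 • q p‖) h₁ h₂ (by fun_prop)

end FirstVariationOfNorm

theorem hasDerivAt_area_add_smul {x ψ : ℝ → ℝ → E3} {U : Set (ℝ × ℝ)} {a₁ b₁ a₂ b₂ : ℝ}
    (h₁ : a₁ ≤ b₁) (h₂ : a₂ ≤ b₂) (hx : ContDiff ℝ ∞ (uncurry x)) (hU : IsOpen U)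
    (hKU : Icc a₁ b₁ ×ˢ Icc a₂ b₂ ⊆ U) (hψ : ContDiffOn ℝ ∞ (uncurry ψ) U)
    (hreg : ∀ p ∈ Icc a₁ b₁ ×ˢ Icc a₂ b₂, cross (pu x p.1 p.2) (pv x p.1 p.2) ≠ 0) :
    HasDerivAt
      (fun t : ℝ => ∫ u in a₁..b₁, ∫ v in a₂..b₂,
        ‖cross (pu (fun a c => x a c + t • ψ a c) u v) (pv (fun a c => x a c + t • ψ a c) u v)‖)
      (∫ u in a₁..b₁, ∫ v in a₂..b₂,
        ⟪cross (pu x u v) (pv x u v), cross (pu ψ u v) (pv x u v) + cross (pu x u v) (pv ψ u v)⟫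
          / ‖cross (pu x u v) (pv x u v)‖) 0 := by
  have hxu := (contDiff_uncurry_pu hx).contDiffOn (s := U)
  have hxv := (contDiff_uncurry_pv hx).contDiffOn (s := U)
  have hψu := contDiffOn_uncurry_pu hU hψ
  have hψv := contDiffOn_uncurry_pv hU hψ
  refine (hasDerivAt_intervalIntegral_intervalIntegral_norm_add_smul_add_sq_smul h₁ h₂
    ((hxu.cross hxv).continuousOn.mono hKU)
    (((hψu.cross hxv).add (hxu.cross hψv)).continuousOn.mono hKU)
    ((hψu.cross hψv).continuousOn.mono hKU) hreg).congr_of_eventuallyEq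
    (Eventually.of_forall fun t => intervalIntegral_intervalIntegral_congr fun u hu v hv => ?_)
  rw [uIcc_of_le h₁] at hu
  rw [uIcc_of_le h₂] at hv
  have hp : (u, v) ∈ U := hKU ⟨hu, hv⟩
  rw [cross_pu_pv_add_smul (hx.differentiable (by simp) (u, v))
    ((hψ.contDiffAt (hU.mem_nhds hp)).differentiableAt (by simp))]
  rfl

/-- The normal variation x^t = x + t b H N with variation function proportional to the
mean curvature: the area A(t) over [0,1]² is differentiable at t = 0 with
A′(0) = −∫₀¹∫₀¹ 2 b H² √(EG − F²) ≤ 0, so to first order the area never increases. -/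
theorem stmt_19 (x : ℝ → ℝ → E3) (b : ℝ → ℝ → ℝ)
    (hx : ContDiff ℝ (⊤ : ℕ∞) (fun p : ℝ × ℝ => x p.1 p.2))
    (hb : ContDiff ℝ (⊤ : ℕ∞) (fun p : ℝ × ℝ => b p.1 p.2))
    (hbnn : ∀ u ∈ Set.Icc (0:ℝ) 1, ∀ v ∈ Set.Icc (0:ℝ) 1, 0 ≤ b u v)
    (hreg : ∃ U : Set (ℝ × ℝ), IsOpen U ∧ Set.Icc (0:ℝ) 1 ×ˢ Set.Icc (0:ℝ) 1 ⊆ U ∧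
      ∀ p ∈ U, 0 < Emag x p.1 p.2 * Gmag x p.1 p.2 - Fmag x p.1 p.2 ^ 2) :
    HasDerivAt
      (fun t : ℝ => ∫ u in (0:ℝ)..1, ∫ v in (0:ℝ)..1,
        ‖cross
          (pu (fun a c => x a c + (t * b a c * meanCurv x a c) • Nvec x a c) u v)
          (pv (fun a c => x a c + (t * b a c * meanCurv x a c) • Nvec x a c) u v)‖)
      (-∫ u in (0:ℝ)..1, ∫ v in (0:ℝ)..1,
        2 * b u v * meanCurv x u v ^ 2
          * Real.sqrt (Emag x u v * Gmag x u v - Fmag x u v ^ 2)) 0 ∧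
    (-∫ u in (0:ℝ)..1, ∫ v in (0:ℝ)..1,
        2 * b u v * meanCurv x u v ^ 2
          * Real.sqrt (Emag x u v * Gmag x u v - Fmag x u v ^ 2)) ≤ 0 := by
  obtain ⟨U, hU, hKU, hQ⟩ := hreg
  set ψ : ℝ → ℝ → E3 := fun a c => (b a c * meanCurv x a c) • Nvec x a c with hψ_def
  have hψ : ContDiffOn ℝ ∞ (uncurry ψ) U :=
    (hb.contDiffOn.mul (contDiffOn_uncurry_meanCurv hx hQ)).smul (contDiffOn_uncurry_Nvec hx hQ)
  have hvariation (t : ℝ) : (fun a c => x a c + (t * b a c * meanCurv x a c) • Nvec x a c)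
      = fun a c => x a c + t • ψ a c := by
    funext a c; rw [mul_assoc, mul_smul]
  have hderiv := hasDerivAt_area_add_smul zero_le_one zero_le_one hx hU hKU hψ
    fun p hp => cross_pu_pv_ne_zero (hQ p (hKU hp))
  rw [intervalIntegral_intervalIntegral_congr
    (g := fun u v => -(2 * b u v * meanCurv x u v ^ 2
      * √(Emag x u v * Gmag x u v - Fmag x u v ^ 2))) fun u hu v hv => by
    rw [uIcc_of_le zero_le_one] at hu hv
    have hp : (u, v) ∈ U := hKU ⟨hu, hv⟩
    rw [inner_cross_variation_div_norm_of_normal hx hψ_def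
      ((hψ.contDiffAt (hU.mem_nhds hp)).differentiableAt (by simp)) (hQ (u, v) hp)]
    ring] at hderiv
  simp only [intervalIntegral.integral_neg, ← hvariation] at hderiv
  refine ⟨hderiv, neg_nonpos.2 <| intervalIntegral.integral_nonneg zero_le_one fun u hu =>
    intervalIntegral.integral_nonneg zero_le_one fun v hv => ?_⟩
  have := hbnn u hu v hv
  positivity
end
end
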